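/- The complete bipartite graph K_{2,3} has an outside-obstacle representation but no inside-obstacle representation. -/

import Mathlib

noncomputable section

/-- The plane ℝ². -/
abbrev Plane : Type := EuclideanSpace ℝ (Fin 2)

/-- A point set is in general position if no three of its points are collinear. -/
def InGenPos (P : Set Plane) : Prop :=
  ∀ p ∈ P, ∀ q ∈ P, ∀ r ∈ P, p ≠ q → p ≠ r → q ≠ r →
    ¬ Collinear ℝ ({p, q, r} : Set Plane)

/-- The union of the closed segments corresponding to the edges of `G`
in the straight-line drawing given by `f`. -/
def edgeUnion {V : Type} (G : SimpleGraph V) (f : V → Plane) : Set Plane :=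
  ⋃ (u : V) (v : V) (_ : G.Adj u v), segment ℝ (f u) (f v)

/-- The unbounded connected component of the complement of the drawing. -/
def outsideRegion {V : Type} (G : SimpleGraph V) (f : V → Plane) : Set Plane :=
  {p | p ∈ (edgeUnion G f)ᶜ ∧
       ¬ Bornology.IsBounded (connectedComponentIn (edgeUnion G f)ᶜ p)}

/-- `(f, C)` is a single-obstacle representation of `G`. -/
def IsObstacleRep {V : Type} (G : SimpleGraph V) (f : V → Plane) (C : Set Plane) : Prop :=
  Function.Injective f ∧ InGenPos (Set.range f) ∧
  IsOpen C ∧ IsConnected C ∧ Disjoint C (Set.range f) ∧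
  ∀ u v : V, u ≠ v → (G.Adj u v ↔ Disjoint (segment ℝ (f u) (f v)) C)

/-- An outside-obstacle representation: the obstacle lies in the unbounded component. -/
def IsOutsideObstacleRep {V : Type} (G : SimpleGraph V) (f : V → Plane) (C : Set Plane) : Prop :=
  IsObstacleRep G f C ∧ C ⊆ outsideRegion G f

/-- An inside-obstacle representation: the obstacle avoids the unbounded component. -/
def IsInsideObstacleRep {V : Type} (G : SimpleGraph V) (f : V → Plane) (C : Set Plane) : Prop :=
  IsObstacleRep G f C ∧ Disjoint C (outsideRegion G f)

/-- An exposed outside-obstacle representation: every vertex lies on the boundary of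
the unbounded component. -/
def IsExposedOutsideObstacleRep {V : Type} (G : SimpleGraph V) (f : V → Plane)
    (C : Set Plane) : Prop :=
  IsOutsideObstacleRep G f C ∧ ∀ v : V, f v ∈ closure (outsideRegion G f)

/-- `p` is an extreme point ("on the convex hull") of the point set `P`. -/
def IsExtremePt (p : Plane) (P : Set Plane) : Prop :=
  p ∉ convexHull ℝ (P \ {p})

/-- `S` has at least `n` connected components. -/
def AtLeastNComponents (S : Set Plane) (n : ℕ) : Prop :=
  ∃ p : Fin n → Plane, (∀ i, p i ∈ S) ∧
    ∀ i j : Fin n, i ≠ j →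
      connectedComponentIn S (p i) ≠ connectedComponentIn S (p j)

/-- `S` has exactly `n` connected components. -/
def ExactlyNComponents (S : Set Plane) (n : ℕ) : Prop :=
  ∃ p : Fin n → Plane, (∀ i, p i ∈ S) ∧
    (∀ i j : Fin n, i ≠ j →
      connectedComponentIn S (p i) ≠ connectedComponentIn S (p j)) ∧
    ∀ q ∈ S, ∃ i : Fin n, connectedComponentIn S q = connectedComponentIn S (p i)

/-- The convex hulls of `A` and `B` are at least `t`-crossing. -/
def AtLeastCrossing (A B : Set Plane) (t : ℕ) : Prop :=
  ((convexHull ℝ A) ∩ (convexHull ℝ B)).Nonempty ∧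
    AtLeastNComponents ((convexHull ℝ A) \ (convexHull ℝ B)) (t + 1)

/-- The convex hulls of `A` and `B` are exactly `t`-crossing. -/
def ExactlyCrossing (A B : Set Plane) (t : ℕ) : Prop :=
  ((convexHull ℝ A) ∩ (convexHull ℝ B)).Nonempty ∧
    ExactlyNComponents ((convexHull ℝ A) \ (convexHull ℝ B)) (t + 1)


/-!
Outside: place `A₀, A₁` and `B₀, B₁, B₂` on the parabola `y = x²` at the parameters `∓2` and
`-1, 0, 1`, so that no three are collinear, and take the outer face as the obstacle. Each non-edge
contains a point from which a half-line escapes to infinity, and every edge is separated from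
that half-line by a line.

Inside: the obstacle `C` meets the non-edge `A₀A₁`. If all three `B`s lie on one side of the line
`A₀A₁`, the whole drawing does, and the open set `C` spills over into the opposite open
half-plane, which is part of the outer face. Otherwise two of them, `B₁, B₂`, lie on one side and
`B₃` on the other. The connected set `C` meets the diagonal `A₀A₁` of the quadrilaterals
`A₀B₁A₁B₃` and `A₀B₂A₁B₃` but none of their sides, so it lies inside both. Yet `C` also meets the
non-edge `B₁B₂`, and no point of `B₁B₂` lies inside both triangles `A₀A₁B₁` and `A₀A₁B₂`.
-/

open Set Metric Bornology RealInnerProductSpace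

section Orientation

/-- Twice the signed area of the triangle `a b c`; positive iff `a, b, c` is counterclockwise. -/
def orient (a b c : Plane) : ℝ := (b 0 - a 0) * (c 1 - a 1) - (b 1 - a 1) * (c 0 - a 0)

variable {a b c q : Plane}

@[simp] lemma orient_self_left (a b : Plane) : orient a b a = 0 := by simp [orient]
@[simp] lemma orient_self_right (a b : Plane) : orient a b b = 0 := by
  simp only [orient]; ring

lemma orient_swap (a b c : Plane) : orient b a c = -orient a b c := by simp only [orient]; ring
lemma orient_cycle (a b c : Plane) : orient b c a = orient a b c := by simp only [orient]; ring

lemma orient_smul_add_smul (a b u v : Plane) {s t : ℝ} (h : s + t = 1) :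
    orient a b (s • u + t • v) = s * orient a b u + t * orient a b v := by
  obtain rfl : t = 1 - s := by linarith
  simp only [orient, PiLp.add_apply, PiLp.smul_apply, smul_eq_mul]; ring

lemma continuous_orient (a b : Plane) : Continuous (orient a b) := by
  unfold orient; fun_prop

/-- Cramer's rule in barycentric form. -/
lemma orient_smul_eq (a b c q : Plane) :
    orient a b c • q = orient b c q • a + orient c a q • b + orient a b q • c := by
  ext i; fin_cases i <;>
    simp only [orient, Fin.zero_eta, Fin.mk_one, PiLp.smul_apply, smul_eq_mul, PiLp.add_apply] <;>
    ring

lemma orient_add_orient_add_orient (a b c q : Plane) :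
    orient b c q + orient c a q + orient a b q = orient a b c := by
  simp only [orient]; ring

lemma orient_eq_zero_of_mem_segment (hq : q ∈ segment ℝ a b) : orient a b q = 0 := by
  obtain ⟨s, t, -, -, hst, rfl⟩ := hq
  simp [orient_smul_add_smul a b a b hst]

lemma sq_sub_add_sq_sub_pos (h : a ≠ b) : 0 < (b 0 - a 0) ^ 2 + (b 1 - a 1) ^ 2 := by
  have : 0 < ‖b - a‖ ^ 2 := by have := sub_ne_zero.2 h.symm; positivity
  simpa [EuclideanSpace.norm_sq_eq, Fin.sum_univ_two] using this

lemma exists_orient_neg (h : a ≠ b) : ∃ m, orient a b m < 0 :=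
  ⟨a + !₂[b 1 - a 1, a 0 - b 0], by
    simp only [orient, PiLp.add_apply, Matrix.cons_val_zero, Matrix.cons_val_one,
      Matrix.cons_val_fin_one, add_sub_cancel_left]
    nlinarith [sq_sub_add_sq_sub_pos h]⟩

lemma convex_orient_preimage {s : Set ℝ} (hs : Convex ℝ s) (a b : Plane) :
    Convex ℝ (orient a b ⁻¹' s) := by
  intro u hu v hv s t hs' ht' hst
  simpa only [mem_preimage, orient_smul_add_smul _ _ _ _ hst, smul_eq_mul] using
    hs hu hv hs' ht' hst

lemma collinear_iff_orient_eq_zero :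
    Collinear ℝ ({a, b, c} : Set Plane) ↔ orient a b c = 0 := by
  constructor
  · rw [collinear_iff_of_mem (mem_insert a _)]
    rintro ⟨w, hw⟩
    obtain ⟨s, rfl⟩ := hw b (by simp)
    obtain ⟨t, rfl⟩ := hw c (by simp)
    simp only [orient, vadd_eq_add, PiLp.add_apply, PiLp.smul_apply, smul_eq_mul]; ring
  · intro h
    rcases eq_or_ne a b with rfl | hab
    · simpa using collinear_pair ℝ a c
    rw [collinear_iff_of_mem (mem_insert a _)]
    refine ⟨b - a, ?_⟩
    simp only [mem_insert_iff, mem_singleton_iff]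
    have hN := (sq_sub_add_sq_sub_pos hab).ne'
    rintro p (rfl | rfl | rfl)
    · exact ⟨0, by simp⟩
    · exact ⟨1, by simp⟩
    · -- `p - a` equals its orthogonal projection onto the line spanned by `b - a`
      refine ⟨((b 0 - a 0) * (p 0 - a 0) + (b 1 - a 1) * (p 1 - a 1)) /
        ((b 0 - a 0) ^ 2 + (b 1 - a 1) ^ 2), ?_⟩
      simp only [orient] at h
      ext i; fin_cases i <;>
        simp only [Fin.zero_eta, Fin.mk_one, vadd_eq_add, PiLp.add_apply, PiLp.smul_apply,
          PiLp.sub_apply, smul_eq_mul] <;> field_simp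
      · linear_combination -(b 1 - a 1) * h
      · linear_combination (b 0 - a 0) * h

end Orientation

section Triangles

variable {a b c c₁ c₂ p m q x : Plane} {C : Set Plane}

lemma eq_smul_add_smul_of_orient_eq_zero (habc : orient a b c ≠ 0) (h : orient a b q = 0) :
    q = (orient b c q / orient a b c) • a + (orient c a q / orient a b c) • b := by
  apply smul_right_injective Plane habc
  simp only [smul_add, smul_smul, mul_div_cancel₀ _ habc]
  rw [orient_smul_eq, h, zero_smul, add_zero]

lemma orient_div_add_orient_div (habc : orient a b c ≠ 0) (h : orient a b q = 0) :
    orient b c q / orient a b c + orient c a q / orient a b c = 1 := by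
  rw [← add_div, div_eq_one_iff_eq habc, ← orient_add_orient_add_orient a b c q, h, add_zero]

lemma mem_segment_of_orient_eq_zero (habc : 0 < orient a b c) (hb : 0 ≤ orient b c q)
    (ha : 0 ≤ orient c a q) (h : orient a b q = 0) : q ∈ segment ℝ a b :=
  ⟨_, _, by positivity, by positivity, orient_div_add_orient_div habc.ne' h,
    (eq_smul_add_smul_of_orient_eq_zero habc.ne' h).symm⟩

lemma mem_openSegment_of_orient_eq_zero (habc : 0 < orient a b c) (hb : 0 < orient b c q)
    (ha : 0 < orient c a q) (h : orient a b q = 0) : q ∈ openSegment ℝ a b :=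
  ⟨_, _, by positivity, by positivity, orient_div_add_orient_div habc.ne' h,
    (eq_smul_add_smul_of_orient_eq_zero habc.ne' h).symm⟩

lemma orient_pos_of_mem_openSegment (habc : 0 < orient a b c) (hq : q ∈ openSegment ℝ a b) :
    0 < orient b c q ∧ 0 < orient c a q := by
  obtain ⟨s, t, hs, ht, hst, rfl⟩ := hq
  have h₁ : orient b c a = orient a b c := orient_cycle a b c
  have h₂ : orient c a b = orient a b c := by rw [orient_cycle, orient_cycle]
  simp only [orient_smul_add_smul _ _ _ _ hst, orient_self_left, orient_self_right, h₁, h₂]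
  constructor <;> positivity

/-- The interior of the triangle `a b c`, nonempty only when `a b c` is counterclockwise. -/
def openTriangle (a b c : Plane) : Set Plane :=
  {q | 0 < orient a b q ∧ 0 < orient b c q ∧ 0 < orient c a q}

def closedTriangle (a b c : Plane) : Set Plane :=
  {q | 0 ≤ orient a b q ∧ 0 ≤ orient b c q ∧ 0 ≤ orient c a q}

lemma isOpen_openTriangle (a b c : Plane) : IsOpen (openTriangle a b c) :=
  (isOpen_lt continuous_const (continuous_orient a b)).inter
    ((isOpen_lt continuous_const (continuous_orient b c)).inter
      (isOpen_lt continuous_const (continuous_orient c a)))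

lemma isClosed_closedTriangle (a b c : Plane) : IsClosed (closedTriangle a b c) :=
  (isClosed_le continuous_const (continuous_orient a b)).inter
    ((isClosed_le continuous_const (continuous_orient b c)).inter
      (isClosed_le continuous_const (continuous_orient c a)))

lemma openTriangle_subset_closedTriangle : openTriangle a b c ⊆ closedTriangle a b c :=
  fun _ ⟨h₁, h₂, h₃⟩ => ⟨h₁.le, h₂.le, h₃.le⟩

lemma openSegment_subset_closedTriangle (habc : 0 < orient a b c) :
    openSegment ℝ a b ⊆ closedTriangle a b c := fun _ hq =>
  have h := orient_pos_of_mem_openSegment habc hq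
  ⟨(orient_eq_zero_of_mem_segment (openSegment_subset_segment ℝ a b hq)).ge, h.1.le, h.2.le⟩

lemma closedTriangle_subset (habc : 0 < orient a b c) :
    closedTriangle a b c ⊆
      openTriangle a b c ∪ (segment ℝ a b ∪ segment ℝ b c ∪ segment ℝ c a) := by
  rintro q ⟨h₁, h₂, h₃⟩
  have hbca : 0 < orient b c a := (orient_cycle a b c).symm ▸ habc
  have hcab : 0 < orient c a b := (orient_cycle b c a).symm ▸ hbca
  rcases h₁.eq_or_lt with h₁ | h₁
  · exact .inr <| .inl <| .inl <| mem_segment_of_orient_eq_zero habc h₂ h₃ h₁.symm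
  rcases h₂.eq_or_lt with h₂ | h₂
  · exact .inr <| .inl <| .inr <| mem_segment_of_orient_eq_zero hbca h₃ h₁.le h₂.symm
  rcases h₃.eq_or_lt with h₃ | h₃
  · exact .inr <| .inr <| mem_segment_of_orient_eq_zero hcab h₁.le h₂.le h₃.symm
  exact .inl ⟨h₁, h₂, h₃⟩

lemma not_mem_openTriangle_of_mem_openSegment (hq : q ∈ openSegment ℝ c₁ c₂)
    (h₁ : q ∈ openTriangle a b c₁) : q ∉ openTriangle a b c₂ := by
  rintro ⟨-, -, h₂⟩
  obtain ⟨s, t, hs, ht, hst, rfl⟩ := hq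
  have h₁ := h₁.2.2
  rw [orient_smul_add_smul _ _ _ _ hst, orient_self_left, mul_zero, zero_add] at h₁
  rw [orient_smul_add_smul _ _ _ _ hst, orient_self_left, mul_zero, add_zero] at h₂
  have : orient c₂ a c₁ = -orient c₁ a c₂ := by simp only [orient]; ring
  nlinarith [pos_of_mul_pos_right h₁ ht.le, pos_of_mul_pos_right h₂ hs.le]

/-- For `p` and `m` on opposite sides of the line `ab`, the interior of the (possibly
nonconvex) quadrilateral `a p b m`. -/
def openQuad (a b p m : Plane) : Set Plane :=
  openTriangle a b p ∪ openTriangle b a m ∪ openSegment ℝ a b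

lemma isOpen_openQuad (hp : 0 < orient a b p) (hm : orient a b m < 0) :
    IsOpen (openQuad a b p m) := by
  have hm' : 0 < orient b a m := by rw [orient_swap]; linarith
  rw [isOpen_iff_forall_mem_open]
  rintro q ((hq | hq) | hq)
  · exact ⟨_, fun y hy => .inl (.inl hy), isOpen_openTriangle a b p, hq⟩
  · exact ⟨_, fun y hy => .inl (.inr hy), isOpen_openTriangle b a m, hq⟩
  -- near the diagonal, the sign of `orient a b` decides where a point lies
  refine ⟨{y | 0 < orient b p y ∧ 0 < orient p a y} ∩ {y | 0 < orient a m y ∧ 0 < orient m b y},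
    ?_, ?_, orient_pos_of_mem_openSegment hp hq,
    orient_pos_of_mem_openSegment hm' (openSegment_symm ℝ a b ▸ hq)⟩
  · rintro y ⟨⟨hy₁, hy₂⟩, hy₃, hy₄⟩
    rcases lt_trichotomy (orient a b y) 0 with hy | hy | hy
    · exact .inl (.inr ⟨by rw [orient_swap]; linarith, hy₃, hy₄⟩)
    · exact .inr (mem_openSegment_of_orient_eq_zero hp hy₁ hy₂ hy)
    · exact .inl (.inl ⟨hy, hy₁, hy₂⟩)
  · exact ((isOpen_lt continuous_const (continuous_orient b p)).inter
      (isOpen_lt continuous_const (continuous_orient p a))).inter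
      ((isOpen_lt continuous_const (continuous_orient a m)).inter
      (isOpen_lt continuous_const (continuous_orient m b)))

lemma closure_openQuad_subset (hp : 0 < orient a b p) :
    closure (openQuad a b p m) ⊆ closedTriangle a b p ∪ closedTriangle b a m := by
  refine closure_minimal ?_
    ((isClosed_closedTriangle a b p).union (isClosed_closedTriangle b a m))
  rintro q ((hq | hq) | hq)
  · exact .inl (openTriangle_subset_closedTriangle hq)
  · exact .inr (openTriangle_subset_closedTriangle hq)
  · exact .inl (openSegment_subset_closedTriangle hp hq)

lemma subset_openQuad (hC : IsPreconnected C) (hp : 0 < orient a b p) (hm : orient a b m < 0)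
    (hap : Disjoint C (segment ℝ a p)) (hbp : Disjoint C (segment ℝ b p))
    (ham : Disjoint C (segment ℝ a m)) (hbm : Disjoint C (segment ℝ b m))
    (hx : x ∈ C) (hxab : x ∈ openSegment ℝ a b) : C ⊆ openQuad a b p m := by
  have hm' : 0 < orient b a m := by rw [orient_swap]; linarith
  refine hC.subset_of_closure_inter_subset (isOpen_openQuad hp hm) ⟨x, hx, .inr hxab⟩ ?_
  rintro q ⟨hq, hqC⟩
  have hqa : a ≠ q := fun h => disjoint_left.1 hap hqC (h ▸ left_mem_segment ℝ a p)
  have hqb : b ≠ q := fun h => disjoint_left.1 hbp hqC (h ▸ left_mem_segment ℝ b p)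
  rcases closure_openQuad_subset hp hq with hq | hq
  · rcases closedTriangle_subset hp hq with hq | (hq | hq) | hq
    · exact .inl (.inl hq)
    · exact .inr (mem_openSegment_of_ne_left_right hqa hqb hq)
    · exact absurd hq (disjoint_left.1 hbp hqC)
    · exact absurd (segment_symm ℝ p a ▸ hq) (disjoint_left.1 hap hqC)
  · rcases closedTriangle_subset hm' hq with hq | (hq | hq) | hq
    · exact .inl (.inr hq)
    · exact .inr (openSegment_symm ℝ a b ▸ mem_openSegment_of_ne_left_right hqb hqa hq)
    · exact absurd hq (disjoint_left.1 ham hqC)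
    · exact absurd (segment_symm ℝ m b ▸ hq) (disjoint_left.1 hbm hqC)

lemma false_of_two_above_one_below (hC : IsPreconnected C) (h₁ : 0 < orient a b c₁)
    (h₂ : 0 < orient a b c₂) (hm : orient a b m < 0)
    (hsides : ∀ u ∈ ({a, b} : Set Plane), ∀ c ∈ ({c₁, c₂, m} : Set Plane),
      Disjoint C (segment ℝ u c))
    (hx : x ∈ C) (hxab : x ∈ openSegment ℝ a b) (hq : q ∈ C) (hqc : q ∈ openSegment ℝ c₁ c₂) :
    False := by
  have hqab : 0 < orient a b q := by
    obtain ⟨s, t, hs, ht, hst, rfl⟩ := hqc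
    rw [orient_smul_add_smul _ _ _ _ hst]
    positivity
  have key : ∀ c, 0 < orient a b c → Disjoint C (segment ℝ a c) → Disjoint C (segment ℝ b c) →
      q ∈ openTriangle a b c := by
    intro c hc hac hbc
    rcases subset_openQuad hC hc hm hac hbc (hsides a (by simp) m (by simp))
      (hsides b (by simp) m (by simp)) hx hxab hq with (h | h) | h
    · exact h
    · exact absurd h.1 (by rw [orient_swap]; linarith)
    · exact absurd (orient_eq_zero_of_mem_segment (openSegment_subset_segment ℝ a b h)) hqab.ne'
  exact not_mem_openTriangle_of_mem_openSegment hqc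
    (key c₁ h₁ (hsides a (by simp) c₁ (by simp)) (hsides b (by simp) c₁ (by simp)))
    (key c₂ h₂ (hsides a (by simp) c₂ (by simp)) (hsides b (by simp) c₂ (by simp)))

end Triangles

section HalfLines

variable {E : Type*}

def halfLine [AddCommGroup E] [Module ℝ E] (w d : E) : Set E :=
  (fun t : ℝ => w + t • d) '' Ici 0

lemma isPreconnected_halfLine [AddCommGroup E] [Module ℝ E] [TopologicalSpace E]
    [ContinuousAdd E] [ContinuousSMul ℝ E] (w d : E) : IsPreconnected (halfLine w d) :=
  isPreconnected_Ici.image _ (by fun_prop)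

lemma not_isBounded_halfLine [NormedAddCommGroup E] [NormedSpace ℝ E] {w d : E} (hd : d ≠ 0) :
    ¬IsBounded (halfLine w d) := by
  intro hb
  obtain ⟨M, hM⟩ := isBounded_iff_forall_norm_le.1 hb
  have hd' : 0 < ‖d‖ := norm_pos_iff.2 hd
  set t := (M + ‖w‖ + 1) / ‖d‖
  have ht : 0 ≤ t := by
    have := (norm_nonneg w).trans (hM w ⟨0, self_mem_Ici, by simp⟩); positivity
  have h₁ := hM _ ⟨t, ht, rfl⟩
  have h₂ : ‖t • d‖ ≤ ‖w + t • d‖ + ‖w‖ := by simpa using norm_sub_le (w + t • d) w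
  rw [norm_smul, Real.norm_of_nonneg ht, div_mul_cancel₀ _ hd'.ne'] at h₂
  linarith

lemma disjoint_halfLine_segment [AddCommGroup E] [Module ℝ E] (ℓ : E →ₗ[ℝ] ℝ) {w d u v : E}
    {r : ℝ} (hw : ℓ w < r) (hd : ℓ d ≤ 0) (hu : r ≤ ℓ u) (hv : r ≤ ℓ v) :
    Disjoint (halfLine w d) (segment ℝ u v) := by
  refine disjoint_left.2 ?_
  rintro _ ⟨t, ht, rfl⟩ hseg
  have : r ≤ ℓ (w + t • d) := (convex_halfSpace_ge ℓ.isLinear r).segment_subset hu hv hseg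
  rw [map_add, map_smul, smul_eq_mul] at this
  nlinarith [mem_Ici.1 ht]

lemma disjoint_halfLine_segment_of_inner [NormedAddCommGroup E] [InnerProductSpace ℝ E]
    (c : E) (r : ℝ) {w d u v : E} (h : ⟪c, w⟫ < r ∧ ⟪c, d⟫ ≤ 0 ∧ r ≤ ⟪c, u⟫ ∧ r ≤ ⟪c, v⟫) :
    Disjoint (halfLine w d) (segment ℝ u v) :=
  disjoint_halfLine_segment (innerSL ℝ c).toLinearMap h.1 h.2.1 h.2.2.1 h.2.2.2

lemma isPreconnected_setOf_lt_norm [NormedAddCommGroup E] [NormedSpace ℝ E]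
    (hE : 1 < Module.rank ℝ E) {R : ℝ} (hR : 0 ≤ R) : IsPreconnected {x : E | R < ‖x‖} := by
  have : {x : E | R < ‖x‖} = (fun p : E × ℝ => p.2 • p.1) '' (sphere 0 1 ×ˢ Ioi R) := by
    ext x
    constructor
    · intro hx
      have hx0 : ‖x‖ ≠ 0 := (hR.trans_lt hx).ne'
      exact ⟨(‖x‖⁻¹ • x, ‖x‖), ⟨by simp [norm_smul, hx0], hx⟩, by simp [smul_smul, hx0]⟩
    · rintro ⟨⟨u, t⟩, ⟨hu, ht⟩, rfl⟩
      simp_all [norm_smul, abs_of_pos (hR.trans_lt ht)]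
  rw [this]
  exact ((isPreconnected_sphere hE 0 1).prod isPreconnected_Ioi).image _ (by fun_prop)

end HalfLines

section OuterFace

variable {V : Type} {G : SimpleGraph V} {f : V → Plane} {A C : Set Plane} {a b w x : Plane}

lemma segment_subset_edgeUnion {u v : V} (h : G.Adj u v) :
    segment ℝ (f u) (f v) ⊆ edgeUnion G f := by
  intro p hp
  simp only [edgeUnion, mem_iUnion]
  exact ⟨u, v, h, hp⟩

lemma edgeUnion_subset_of_convex {s : Set Plane} (hs : Convex ℝ s) (hf : ∀ v, f v ∈ s) :
    edgeUnion G f ⊆ s := by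
  simp only [edgeUnion, iUnion_subset_iff]
  exact fun u v _ => hs.segment_subset (hf u) (hf v)

lemma isClosed_edgeUnion [Finite V] (G : SimpleGraph V) (f : V → Plane) :
    IsClosed (edgeUnion G f) := by
  refine isClosed_iUnion_of_finite fun u => isClosed_iUnion_of_finite fun v =>
    isClosed_iUnion_of_finite fun _ => ?_
  rw [← convexHull_pair]
  exact ((toFinite _).isCompact_convexHull (𝕜 := ℝ)).isClosed

lemma exists_edgeUnion_subset_closedBall [Finite V] (G : SimpleGraph V) (f : V → Plane) :
    ∃ R, 0 ≤ R ∧ edgeUnion G f ⊆ closedBall 0 R := by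
  obtain ⟨R, hR⟩ := (finite_range f).isBounded.subset_closedBall 0
  exact ⟨max R 0, le_max_right R 0, edgeUnion_subset_of_convex (convex_closedBall 0 _)
    fun v => closedBall_subset_closedBall (le_max_left R 0) (hR ⟨v, rfl⟩)⟩

lemma mem_outsideRegion_of_isPreconnected (hA : IsPreconnected A) (hAb : ¬IsBounded A)
    (hAe : Disjoint A (edgeUnion G f)) (hw : w ∈ A) : w ∈ outsideRegion G f :=
  ⟨hAe.subset_compl_right hw,
    fun hb => hAb (hb.subset (hA.subset_connectedComponentIn hw hAe.subset_compl_right))⟩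

lemma mem_outsideRegion_of_disjoint_halfLine {d : Plane} (hd : d ≠ 0)
    (h : Disjoint (halfLine w d) (edgeUnion G f)) : w ∈ outsideRegion G f :=
  mem_outsideRegion_of_isPreconnected (isPreconnected_halfLine w d) (not_isBounded_halfLine hd) h
    ⟨0, self_mem_Ici, by simp⟩

lemma outsideRegion_eq_connectedComponentIn {R : ℝ} (hR₀ : 0 ≤ R)
    (hR : edgeUnion G f ⊆ closedBall 0 R) {p : Plane} (hp : R < ‖p‖) :
    outsideRegion G f = connectedComponentIn (edgeUnion G f)ᶜ p := by
  set S := edgeUnion G f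
  have hfar : {x : Plane | R < ‖x‖} ⊆ Sᶜ := fun x hx hxS =>
    not_lt.2 (mem_closedBall_zero_iff.1 (hR hxS)) hx
  have hfarC : IsPreconnected {x : Plane | R < ‖x‖} := isPreconnected_setOf_lt_norm
    (by rw [← Module.finrank_eq_rank, finrank_euclideanSpace_fin]; norm_num) hR₀
  have hfarB : ¬IsBounded {x : Plane | R < ‖x‖} := fun hb =>
    NormedSpace.unbounded_univ ℝ Plane <| (hb.union (isBounded_closedBall (x := 0) (r := R))).subset
      fun x _ => (lt_or_ge R ‖x‖).imp id mem_closedBall_zero_iff.2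
  ext q
  constructor
  · rintro ⟨hq, hqb⟩
    obtain ⟨z, hz, hzR⟩ : ∃ z ∈ connectedComponentIn Sᶜ q, R < ‖z‖ := by
      by_contra! h
      exact hqb <| isBounded_closedBall.subset fun z hz => mem_closedBall_zero_iff.2 (h z hz)
    have hpq : p ∈ connectedComponentIn Sᶜ q :=
      connectedComponentIn_eq hz ▸ hfarC.subset_connectedComponentIn hzR hfar hp
    exact connectedComponentIn_eq hpq ▸ mem_connectedComponentIn hq
  · intro hq
    refine ⟨connectedComponentIn_subset _ _ hq, fun hb => hfarB (hb.subset ?_)⟩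
    exact connectedComponentIn_eq hq ▸ hfarC.subset_connectedComponentIn hp hfar

lemma exists_outsideRegion_eq_connectedComponentIn [Finite V] (G : SimpleGraph V)
    (f : V → Plane) :
    ∃ p ∉ edgeUnion G f, outsideRegion G f = connectedComponentIn (edgeUnion G f)ᶜ p := by
  obtain ⟨R, hR₀, hR⟩ := exists_edgeUnion_subset_closedBall G f
  obtain ⟨p, hp⟩ := exists_norm_eq Plane (by positivity : (0 : ℝ) ≤ R + 1)
  have hpR : R < ‖p‖ := by linarith
  exact ⟨p, fun h => not_lt.2 (mem_closedBall_zero_iff.1 (hR h)) hpR,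
    outsideRegion_eq_connectedComponentIn hR₀ hR hpR⟩

lemma isOpen_outsideRegion [Finite V] (G : SimpleGraph V) (f : V → Plane) :
    IsOpen (outsideRegion G f) := by
  obtain ⟨p, -, h⟩ := exists_outsideRegion_eq_connectedComponentIn G f
  exact h ▸ (isClosed_edgeUnion G f).isOpen_compl.connectedComponentIn

lemma isConnected_outsideRegion [Finite V] (G : SimpleGraph V) (f : V → Plane) :
    IsConnected (outsideRegion G f) := by
  obtain ⟨p, hp, h⟩ := exists_outsideRegion_eq_connectedComponentIn G f
  exact h ▸ isConnected_connectedComponentIn_iff.2 hp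

/-- The open half-plane on the other side of the line `ab` avoids the drawing and is convex and
unbounded, hence part of the outer face. -/
lemma inter_outsideRegion_nonempty (hab : a ≠ b) (hf : ∀ v, 0 ≤ orient a b (f v))
    (hC : IsOpen C) (hx : x ∈ C) (hxab : orient a b x = 0) :
    (C ∩ outsideRegion G f).Nonempty := by
  obtain ⟨m, hm⟩ := exists_orient_neg hab
  set H := orient a b ⁻¹' Iio 0
  have hHe : Disjoint H (edgeUnion G f) := by
    have := edgeUnion_subset_of_convex (G := G) (convex_orient_preimage (convex_Ici 0) a b) hf
    exact disjoint_left.2 fun q (hq : orient a b q < 0) hq' => (this hq').not_gt hq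
  have hHb : ¬IsBounded H := by
    have hma : m - a ≠ 0 := sub_ne_zero.2 fun h => by simp [h] at hm
    refine fun hb => not_isBounded_halfLine (w := m) hma (hb.subset ?_)
    rintro _ ⟨t, ht, rfl⟩
    have : orient a b (m + t • (m - a)) = (1 + t) * orient a b m := by
      simp only [orient, PiLp.add_apply, PiLp.sub_apply, PiLp.smul_apply, smul_eq_mul]; ring
    simp only [H, mem_preimage, mem_Iio, this]
    nlinarith [mem_Ici.1 ht]
  have hxH : x ∈ closure H := by
    refine closure_mono ?_ (closure_openSegment (𝕜 := ℝ) x m ▸ left_mem_segment ℝ x m)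
    rintro _ ⟨s, t, -, ht, hst, rfl⟩
    simp only [H, mem_preimage, mem_Iio, orient_smul_add_smul _ _ _ _ hst, hxab]
    nlinarith
  obtain ⟨y, hyC, hyH⟩ := mem_closure_iff.1 hxH C hC hx
  exact ⟨y, hyC, mem_outsideRegion_of_isPreconnected
    (convex_orient_preimage (convex_Iio 0) a b).isPreconnected hHb hHe hyH⟩

end OuterFace

section ObstacleRep

variable {V : Type} {G : SimpleGraph V} {f : V → Plane} {C : Set Plane} {u v w : V}

lemma IsObstacleRep.disjoint_segment (h : IsObstacleRep G f C) (huv : G.Adj u v) :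
    Disjoint C (segment ℝ (f u) (f v)) :=
  ((h.2.2.2.2.2 u v huv.ne).1 huv).symm

lemma IsObstacleRep.exists_mem_openSegment (h : IsObstacleRep G f C) (huv : u ≠ v)
    (hadj : ¬G.Adj u v) : ∃ x ∈ C, x ∈ openSegment ℝ (f u) (f v) := by
  obtain ⟨x, hxs, hxC⟩ := not_disjoint_iff.1 (mt (h.2.2.2.2.2 u v huv).2 hadj)
  have hne : ∀ v', f v' ≠ x := fun v' he => disjoint_left.1 h.2.2.2.2.1 hxC ⟨v', he⟩
  exact ⟨x, hxC, mem_openSegment_of_ne_left_right (hne u) (hne v) hxs⟩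

lemma IsObstacleRep.orient_ne_zero (h : IsObstacleRep G f C) (huv : u ≠ v) (huw : u ≠ w)
    (hvw : v ≠ w) : orient (f u) (f v) (f w) ≠ 0 :=
  mt collinear_iff_orient_eq_zero.2 <| h.2.1 _ ⟨u, rfl⟩ _ ⟨v, rfl⟩ _ ⟨w, rfl⟩
    (h.1.ne huv) (h.1.ne huw) (h.1.ne hvw)

theorem isOutsideObstacleRep_outsideRegion [Finite V] (hf : Function.Injective f)
    (hgen : InGenPos (range f)) (hdeg : ∀ v, ∃ w, G.Adj v w)
    (hnonadj : ∀ u v, u ≠ v → ¬G.Adj u v →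
      (segment ℝ (f u) (f v) ∩ outsideRegion G f).Nonempty) :
    IsOutsideObstacleRep G f (outsideRegion G f) := by
  refine ⟨⟨hf, hgen, isOpen_outsideRegion G f, isConnected_outsideRegion G f, ?_,
    fun u v huv => ⟨fun hadj => ?_, fun hdisj => ?_⟩⟩, subset_rfl⟩
  · refine disjoint_left.2 fun p hp ⟨v, hv⟩ => ?_
    obtain ⟨w, hvw⟩ := hdeg v
    exact hp.1 (segment_subset_edgeUnion hvw (hv ▸ left_mem_segment ℝ (f v) (f w)))
  · exact disjoint_left.2 fun p hp hpO => hpO.1 (segment_subset_edgeUnion hadj hp)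
  · by_contra hadj
    obtain ⟨p, hp, hpO⟩ := hnonadj u v huv hadj
    exact disjoint_left.1 hdisj hp hpO

end ObstacleRep

section CompleteBipartite

local notation "K₂₃" => completeBipartiteGraph (Fin 2) (Fin 3)

lemma InGenPos.mono {P Q : Set Plane} (hQ : InGenPos Q) (h : P ⊆ Q) : InGenPos P :=
  fun p hp q hq r hr => hQ p (h hp) q (h hq) r (h hr)

def parabola (t : ℝ) : Plane := !₂[t, t ^ 2]

lemma parabola_injective : Function.Injective parabola := fun s t h => by
  simpa [parabola] using congrArg (· 0) h

lemma orient_parabola (s t u : ℝ) :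
    orient (parabola s) (parabola t) (parabola u) = (t - s) * (u - s) * (u - t) := by
  simp only [orient, parabola, Matrix.cons_val_zero, Matrix.cons_val_one, Matrix.cons_val_fin_one]
  ring

lemma inGenPos_range_parabola : InGenPos (range parabola) := by
  rintro _ ⟨s, rfl⟩ _ ⟨t, rfl⟩ _ ⟨u, rfl⟩ hst hsu htu
  rw [collinear_iff_orient_eq_zero, orient_parabola]
  have hne : ∀ {s t : ℝ}, parabola s ≠ parabola t → t - s ≠ 0 :=
    fun h => sub_ne_zero.2 (Ne.symm (mt (congrArg parabola) h))
  exact mul_ne_zero (mul_ne_zero (hne hst) (hne hsu)) (hne htu)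

@[simp] lemma inner_vec₂ (a b c d : ℝ) : ⟪!₂[a, b], !₂[c, d]⟫ = a * c + b * d := by
  simp only [PiLp.inner_apply, RCLike.inner_apply, conj_trivial, Fin.sum_univ_two,
    Matrix.cons_val_zero, Matrix.cons_val_one, Matrix.cons_val_fin_one]
  ring

lemma disjoint_edgeUnion_completeBipartiteGraph {α β : Type} {f : α ⊕ β → Plane}
    {A : Set Plane} (h : ∀ i j, Disjoint A (segment ℝ (f (.inl i)) (f (.inr j)))) :
    Disjoint A (edgeUnion (completeBipartiteGraph α β) f) := by
  simp only [edgeUnion, disjoint_iUnion_right]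
  rintro (i | i) (j | j) hadj <;> simp at hadj
  · exact h i j
  · exact segment_symm ℝ (f (.inl j)) (f (.inr i)) ▸ h j i

def k23Drawing : Fin 2 ⊕ Fin 3 → Plane := parabola ∘ Sum.elim ![-2, 2] ![-1, 0, 1]

lemma k23Drawing_injective : Function.Injective k23Drawing := by
  refine parabola_injective.comp ?_
  rintro (i | i) (j | j) h <;> fin_cases i <;> fin_cases j <;> simp at h ⊢ <;> norm_num at h

/-! In each of the four witnesses below, the half-line misses every edge because one of the two
listed lines `⟪c, ·⟫ = r` separates it from that edge. -/

lemma inl_segment_inter_outsideRegion_nonempty :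
    (segment ℝ (k23Drawing (.inl 0)) (k23Drawing (.inl 1)) ∩
      outsideRegion K₂₃ k23Drawing).Nonempty := by
  refine ⟨!₂[0, 4], ⟨1/2, 1/2, by norm_num, by norm_num, by norm_num, ?_⟩,
    mem_outsideRegion_of_disjoint_halfLine (d := !₂[0, 1]) (by simp)
      (disjoint_edgeUnion_completeBipartiteGraph fun i j => ?_)⟩
  · ext i; fin_cases i <;> norm_num [k23Drawing, parabola]
  fin_cases i <;> fin_cases j
  all_goals first
    | apply disjoint_halfLine_segment_of_inner !₂[-1, -1] (-2)
      norm_num [k23Drawing, parabola, Matrix.cons_val_two]; done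
    | apply disjoint_halfLine_segment_of_inner !₂[1, -1] (-2)
      norm_num [k23Drawing, parabola, Matrix.cons_val_two]

lemma inr₀₁_segment_inter_outsideRegion_nonempty :
    (segment ℝ (k23Drawing (.inr 0)) (k23Drawing (.inr 1)) ∩
      outsideRegion K₂₃ k23Drawing).Nonempty := by
  refine ⟨!₂[-1/2, 1/2], ⟨1/2, 1/2, by norm_num, by norm_num, by norm_num, ?_⟩,
    mem_outsideRegion_of_disjoint_halfLine (d := !₂[0, -1]) (by simp)
      (disjoint_edgeUnion_completeBipartiteGraph fun i j => ?_)⟩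
  · ext i; fin_cases i <;> norm_num [k23Drawing, parabola]
  fin_cases i <;> fin_cases j
  all_goals first
    | apply disjoint_halfLine_segment_of_inner !₂[0, 1] 1
      norm_num [k23Drawing, parabola, Matrix.cons_val_two]; done
    | apply disjoint_halfLine_segment_of_inner !₂[2, 1] 0
      norm_num [k23Drawing, parabola, Matrix.cons_val_two]

lemma inr₁₂_segment_inter_outsideRegion_nonempty :
    (segment ℝ (k23Drawing (.inr 1)) (k23Drawing (.inr 2)) ∩
      outsideRegion K₂₃ k23Drawing).Nonempty := by
  refine ⟨!₂[1/2, 1/2], ⟨1/2, 1/2, by norm_num, by norm_num, by norm_num, ?_⟩,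
    mem_outsideRegion_of_disjoint_halfLine (d := !₂[0, -1]) (by simp)
      (disjoint_edgeUnion_completeBipartiteGraph fun i j => ?_)⟩
  · ext i; fin_cases i <;> norm_num [k23Drawing, parabola, Matrix.cons_val_two]
  fin_cases i <;> fin_cases j
  all_goals first
    | apply disjoint_halfLine_segment_of_inner !₂[0, 1] 1
      norm_num [k23Drawing, parabola, Matrix.cons_val_two]; done
    | apply disjoint_halfLine_segment_of_inner !₂[-2, 1] 0
      norm_num [k23Drawing, parabola, Matrix.cons_val_two]

lemma inr₀₂_segment_inter_outsideRegion_nonempty :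
    (segment ℝ (k23Drawing (.inr 0)) (k23Drawing (.inr 2)) ∩
      outsideRegion K₂₃ k23Drawing).Nonempty := by
  refine ⟨!₂[-3/4, 1], ⟨7/8, 1/8, by norm_num, by norm_num, by norm_num, ?_⟩,
    mem_outsideRegion_of_disjoint_halfLine (d := !₂[0, -1]) (by simp)
      (disjoint_edgeUnion_completeBipartiteGraph fun i j => ?_)⟩
  · ext i; fin_cases i <;> norm_num [k23Drawing, parabola, Matrix.cons_val_two]
  fin_cases i <;> fin_cases j
  all_goals first
    | apply disjoint_halfLine_segment_of_inner !₂[-2, 2] 4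
      norm_num [k23Drawing, parabola, Matrix.cons_val_two]; done
    | apply disjoint_halfLine_segment_of_inner !₂[2, 1] 0
      norm_num [k23Drawing, parabola, Matrix.cons_val_two]

theorem isOutsideObstacleRep_k23Drawing :
    IsOutsideObstacleRep K₂₃ k23Drawing (outsideRegion K₂₃ k23Drawing) := by
  refine isOutsideObstacleRep_outsideRegion k23Drawing_injective
    (inGenPos_range_parabola.mono (range_comp_subset_range _ _)) ?_ ?_
  · rintro (i | j)
    exacts [⟨.inr 0, by simp⟩, ⟨.inl 0, by simp⟩]
  · rintro (i | i) (j | j) huv hadj <;> simp at hadj <;> fin_cases i <;> fin_cases j <;>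
      simp at huv
    all_goals first
      | exact inl_segment_inter_outsideRegion_nonempty
      | (rw [segment_symm]; exact inl_segment_inter_outsideRegion_nonempty)
      | exact inr₀₁_segment_inter_outsideRegion_nonempty
      | (rw [segment_symm]; exact inr₀₁_segment_inter_outsideRegion_nonempty)
      | exact inr₁₂_segment_inter_outsideRegion_nonempty
      | (rw [segment_symm]; exact inr₁₂_segment_inter_outsideRegion_nonempty)
      | exact inr₀₂_segment_inter_outsideRegion_nonempty
      | (rw [segment_symm]; exact inr₀₂_segment_inter_outsideRegion_nonempty)

lemma exists_ne_mul_pos {σ : Fin 3 → ℝ} (hσ : ∀ j, σ j ≠ 0) :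
    ∃ j k, j ≠ k ∧ 0 < σ j * σ k := by
  by_contra! h
  have h₀₁ := h 0 1 (by decide)
  have h₀₂ := h 0 2 (by decide)
  have h₁₂ := h 1 2 (by decide)
  have : 0 < (σ 0 * σ 1 * σ 2) ^ 2 := by
    have := hσ 0; have := hσ 1; have := hσ 2; positivity
  nlinarith [mul_nonpos_of_nonneg_of_nonpos (mul_nonneg_of_nonpos_of_nonpos h₀₁ h₀₂) h₁₂]

lemma false_of_isInsideObstacleRep_of_two_pos {f : Fin 2 ⊕ Fin 3 → Plane} {C : Set Plane}
    (hrep : IsInsideObstacleRep K₂₃ f C) {i i' : Fin 2} (hii' : i ≠ i') {j k : Fin 3}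
    (hjk : j ≠ k) (hj : 0 < orient (f (.inl i)) (f (.inl i')) (f (.inr j)))
    (hk : 0 < orient (f (.inl i)) (f (.inl i')) (f (.inr k))) : False := by
  obtain ⟨hrep, hout⟩ := hrep
  obtain ⟨x, hxC, hx⟩ :=
    hrep.exists_mem_openSegment (u := .inl i) (v := .inl i') (by simpa) (by simp)
  obtain ⟨q, hqC, hq⟩ :=
    hrep.exists_mem_openSegment (u := .inr j) (v := .inr k) (by simpa) (by simp)
  have habove : ∀ l, 0 < orient (f (.inl i)) (f (.inl i')) (f (.inr l)) := by
    intro l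
    refine (hrep.orient_ne_zero (by simpa) (by simp) (by simp)).lt_or_gt.resolve_left fun hl => ?_
    refine false_of_two_above_one_below hrep.2.2.2.1.isPreconnected hj hk hl ?_ hxC hx hqC hq
    simp only [mem_insert_iff, mem_singleton_iff]
    rintro u (rfl | rfl) c (rfl | rfl | rfl) <;> exact hrep.disjoint_segment (by simp)
  have hhalf : ∀ v, 0 ≤ orient (f (.inl i)) (f (.inl i')) (f v) := by
    rintro (i'' | l)
    · obtain rfl | rfl : i'' = i ∨ i'' = i' := by omega
      all_goals simp
    · exact (habove l).le
  obtain ⟨y, hyC, hyO⟩ := inter_outsideRegion_nonempty (hrep.1.ne (by simpa)) hhalf hrep.2.2.1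
    hxC (orient_eq_zero_of_mem_segment (openSegment_subset_segment ℝ _ _ hx))
  exact disjoint_left.1 hout hyC hyO

end CompleteBipartite

/-- `K_{2,3}` has an outside-obstacle representation but no
inside-obstacle representation. -/
theorem K23_outside_not_inside :
    (∃ (f : Fin 2 ⊕ Fin 3 → Plane) (C : Set Plane),
      IsOutsideObstacleRep (completeBipartiteGraph (Fin 2) (Fin 3)) f C) ∧
    ¬ ∃ (f : Fin 2 ⊕ Fin 3 → Plane) (C : Set Plane),
      IsInsideObstacleRep (completeBipartiteGraph (Fin 2) (Fin 3)) f C := by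
  refine ⟨⟨k23Drawing, _, isOutsideObstacleRep_k23Drawing⟩, ?_⟩
  rintro ⟨f, C, hrep⟩
  obtain ⟨j, k, hjk, hjk'⟩ := exists_ne_mul_pos fun l =>
    hrep.1.orient_ne_zero (u := .inl 0) (v := .inl 1) (w := .inr l) (by simp) (by simp) (by simp)
  rcases mul_pos_iff.1 hjk' with ⟨hj, hk⟩ | ⟨hj, hk⟩
  · exact false_of_isInsideObstacleRep_of_two_pos hrep zero_ne_one hjk hj hk
  · refine false_of_isInsideObstacleRep_of_two_pos hrep one_ne_zero hjk ?_ ?_ <;>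
      rw [orient_swap] <;> linarith

end
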